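/- arXiv:1201.2541 — 3 statements merged into one kernel-verified Lean document; each statement's English description precedes it below -/
import Mathlib

section
/- Let f : [0,1] → [0,1] be continuous, and suppose x ∈ [0,1] has a strictly increasing sequence of iterates: there exist times n₁ < n₂ < ... with f^{n₁}(x) < f^{n₂}(x) < ... converging to a point b, with all f^{n_k}(x) < b. If no point of the interval (f^{n₁}(x), b) is periodic, then b itself never maps into (f^{n₁}(x), b): for all t ≥ 1, f^t(b) ∉ (f^{n₁}(x), b). -/
open Set Filter

theorem one_sided_limit_b_never_returns
    (f : ℝ → ℝ) (hf : ContinuousOn f (Icc 0 1))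
    (hmaps : MapsTo f (Icc 0 1) (Icc 0 1))
    (x : ℝ) (hx : x ∈ Icc (0:ℝ) 1)
    (n : ℕ → ℕ) (hn : StrictMono n)
    (b : ℝ)
    (hmono : StrictMono (fun k => f^[n k] x))
    (hlt : ∀ k, f^[n k] x < b)
    (hlim : Tendsto (fun k => f^[n k] x) atTop (nhds b))
    (hnoper : ∀ y ∈ Ioo (f^[n 0] x) b, ∀ m ≥ 1, f^[m] y ≠ y) :
    ∀ t ≥ 1, f^[t] b ∉ Ioo (f^[n 0] x) b := by
  -- continuity and invariance of iterates
  have hCM : ∀ m : ℕ, ContinuousOn (f^[m]) (Icc 0 1) ∧ MapsTo (f^[m]) (Icc 0 1) (Icc 0 1) := by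
    intro m
    induction m with
    | zero => simpa using ⟨continuousOn_id, fun y hy => hy⟩
    | succ k ih =>
      refine ⟨?_, ?_⟩
      · rw [Function.iterate_succ']
        exact hf.comp ih.1 ih.2
      · rw [Function.iterate_succ']
        exact hmaps.comp ih.2
  set a : ℕ → ℝ := fun k => f^[n k] x with ha
  have haI : ∀ k, a k ∈ Icc (0:ℝ) 1 := fun k => (hCM (n k)).2 hx
  have hbI : b ∈ Icc (0:ℝ) 1 :=
    isClosed_Icc.mem_of_tendsto hlim (Eventually.of_forall haI)
  have hbO : ∀ s : ℕ, f^[s] b ∈ Icc (0:ℝ) 1 := fun s => (hCM s).2 hbI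
  -- orbit alignment: gaps act on a-points
  have hgap : ∀ k j : ℕ, k ≤ j → f^[n j - n k] (a k) = a j := by
    intro k j hkj
    show f^[n j - n k] (f^[n k] x) = f^[n j] x
    rw [← Function.iterate_add_apply, Nat.sub_add_cancel (hn.monotone hkj)]
  intro t ht hd
  -- notation: c = a 0
  have hc0 : (0:ℝ) ≤ a 0 := (haI 0).1
  have hcb : a 0 < b := hlt 0
  have haJ : ∀ k, 1 ≤ k → a k ∈ Ioo (a 0) b := fun k hk => ⟨hmono (Nat.pos_of_ne_zero (by omega)), hlt k⟩
  -- S1 : b is not periodic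
  have S1 : ∀ s : ℕ, 1 ≤ s → f^[s] b ≠ b := by
    intro s hs heq
    refine hnoper (f^[t] b) hd s hs ?_
    calc f^[s] (f^[t] b) = f^[s + t] b := (Function.iterate_add_apply f s t b).symm
    _ = f^[t + s] b := by rw [Nat.add_comm]
    _ = f^[t] (f^[s] b) := Function.iterate_add_apply f t s b
    _ = f^[t] b := by rw [heq]
  -- S2 : straddle kill (up at w, down at b)
  have S2 : ∀ s : ℕ, 1 ≤ s → ∀ w, w ∈ Ioo (a 0) b →
      w ≤ f^[s] w → f^[s] b ≤ b → False := by
    intro s hs w hw hup hdown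
    -- g y = f^[s] y - y continuous on [w, b]
    have hw0 : (0:ℝ) ≤ w := le_trans hc0 (le_of_lt hw.1)
    have hwb : w ≤ b := le_of_lt hw.2
    have hsub : Icc w b ⊆ Icc (0:ℝ) 1 := Icc_subset_Icc hw0 hbI.2
    have hgC : ContinuousOn (fun y => f^[s] y - y) (Icc w b) :=
      ((hCM s).1.mono hsub).sub continuousOn_id
    have hvb : f^[s] b - b ≤ 0 := sub_nonpos.mpr hdown
    have hvw : 0 ≤ f^[s] w - w := sub_nonneg.mpr hup
    have := intermediate_value_Icc' hwb hgC
    have h0 : (0:ℝ) ∈ Icc (f^[s] b - b) (f^[s] w - w) := ⟨hvb, hvw⟩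
    obtain ⟨z, hz, hz0⟩ := this h0
    have hzfix : f^[s] z = z := by linarith [sub_eq_zero.mp hz0, hz0] 
    have hzb : z ≠ b := by
      intro h; rw [h] at hzfix; exact S1 s hs hzfix
    have hzJ : z ∈ Ioo (a 0) b := ⟨lt_of_lt_of_le hw.1 hz.1, lt_of_le_of_ne hz.2 hzb⟩
    exact hnoper z hzJ s hs hzfix
  -- S2' : straddle kill (down at w, up at b)
  have S2' : ∀ s : ℕ, 1 ≤ s → ∀ w, w ∈ Ioo (a 0) b →
      f^[s] w ≤ w → b ≤ f^[s] b → False := by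
    intro s hs w hw hdown hup
    have hw0 : (0:ℝ) ≤ w := le_trans hc0 (le_of_lt hw.1)
    have hwb : w ≤ b := le_of_lt hw.2
    have hsub : Icc w b ⊆ Icc (0:ℝ) 1 := Icc_subset_Icc hw0 hbI.2
    have hgC : ContinuousOn (fun y => f^[s] y - y) (Icc w b) :=
      ((hCM s).1.mono hsub).sub continuousOn_id
    have := intermediate_value_Icc hwb hgC
    have h0 : (0:ℝ) ∈ Icc (f^[s] w - w) (f^[s] b - b) := ⟨sub_nonpos.mpr hdown, sub_nonneg.mpr hup⟩
    obtain ⟨z, hz, hz0⟩ := this h0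
    have hzfix : f^[s] z = z := by linarith [sub_eq_zero.mp hz0, hz0]
    have hzb : z ≠ b := by
      intro h
      rw [h] at hzfix; exact S1 s hs hzfix
    have hzJ : z ∈ Ioo (a 0) b := ⟨lt_of_lt_of_le hw.1 hz.1, lt_of_le_of_ne hz.2 hzb⟩
    exact hnoper z hzJ s hs hzfix
  
  -- dichotomy
  have S3down : ∀ s : ℕ, 1 ≤ s → f^[s] b < b → ∀ w, w ∈ Ioo (a 0) b → f^[s] w < w := by
    intro s hs hsb w hw
    by_contra hge
    exact S2 s hs w hw (le_of_not_gt hge) (le_of_lt hsb)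
  have S3up : ∀ s : ℕ, 1 ≤ s → b < f^[s] b → ∀ w, w ∈ Ioo (a 0) b → w < f^[s] w := by
    intro s hs hsb w hw
    by_contra hge
    exact S2' s hs w hw (le_of_not_gt hge) (le_of_lt hsb)
  -- gap maps push b strictly above b
  have gapb : ∀ k j : ℕ, 1 ≤ k → k < j → b < f^[n j - n k] b := by
    intro k j hk hkj
    have hnkj : n k < n j := hn hkj
    have hs : 1 ≤ n j - n k := by omega
    have hup : a k < f^[n j - n k] (a k) := by
      rw [hgap k j (le_of_lt hkj)]; exact hmono hkj
    rcases lt_trichotomy (f^[n j - n k] b) b with h | h | h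
    · exact absurd (S3down _ hs h (a k) (haJ k hk)) (not_lt.mpr (le_of_lt hup))
    · exact absurd h (S1 _ hs)
    · exact h
  -- the climbing step
  have climb : ∀ T : ℕ, 1 ≤ T → f^[T] b ∈ Ioo (a 0) b → ∀ q, 1 ≤ q → ∀ j, q < j →
      f^[T] b < a q →
      f^[T] b < f^[n j - n q] (f^[T] b) ∧ f^[n j - n q] (f^[T] b) < b := by
    intro T hT hV q hq j hqj hVq
    set V := f^[T] b with hVdef
    set g := n j - n q with hgdef
    have hg1 : 1 ≤ g := by have := hn hqj; omega
    have haj : f^[g] (a q) = a j := hgap q j (le_of_lt hqj)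
    have hVaq : V ≤ a q := le_of_lt hVq
    have hV0 : (0:ℝ) ≤ V := (hbO T).1
    have hsub : Icc V (a q) ⊆ Icc (0:ℝ) 1 := Icc_subset_Icc hV0 (haI q).2
    constructor
    · -- V < f^[g] V
      by_contra hge
      push_neg at hge
      have hgC : ContinuousOn (fun y => f^[g] y - y) (Icc V (a q)) :=
        ((hCM g).1.mono hsub).sub continuousOn_id
      have h0 : (0:ℝ) ∈ Icc (f^[g] V - V) (f^[g] (a q) - a q) := by
        constructor
        · exact sub_nonpos.mpr hge
        · rw [haj]; exact sub_nonneg.mpr (le_of_lt (hmono hqj))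
      obtain ⟨z, hz, hz0⟩ := intermediate_value_Icc hVaq hgC h0
      have hzfix : f^[g] z = z := by
        have : f^[g] z - z = 0 := hz0
        linarith
      have hzJ : z ∈ Ioo (a 0) b :=
        ⟨lt_of_lt_of_le hV.1 hz.1, lt_of_le_of_lt hz.2 (hlt q)⟩
      exact hnoper z hzJ g hg1 hzfix
    · -- f^[g] V < b
      by_contra hge
      push_neg at hge
      have hgb : f^[g + T] b = f^[g] V := by
        rw [Function.iterate_add_apply]
      have hne : f^[g] V ≠ b := by
        intro h
        exact S1 (g + T) (by omega) (by rw [hgb, h])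
      have hbfV : b < f^[g] V := lt_of_le_of_ne hge (Ne.symm hne)
      -- find preimage of b strictly between V and a q
      have hφC : ContinuousOn (f^[g]) (Icc V (a q)) := (hCM g).1.mono hsub
      have hmem : b ∈ Icc (f^[g] (a q)) (f^[g] V) := by
        rw [haj]; exact ⟨le_of_lt (hlt j), le_of_lt hbfV⟩
      obtain ⟨w, hw, hwb⟩ := intermediate_value_Icc' hVaq hφC hmem
      have hwV : V < w := by
        rcases lt_or_eq_of_le hw.1 with h | h
        · exact h
        · exact absurd (h ▸ hwb) (by rw [← h] at hwb; intro _; exact hne (by rw [← hwb]))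
      have hwJ : w ∈ Ioo (a 0) b :=
        ⟨lt_trans hV.1 hwV, lt_of_le_of_lt hw.2 (hlt q)⟩
      -- straddle with H = f^[T + g]
      have hH1 : f^[T + g] w ≤ w := by
        rw [Function.iterate_add_apply, hwb, ← hVdef]
        exact le_of_lt hwV
      have hH2 : b ≤ f^[T + g] b := by
        rw [Nat.add_comm, hgb]
        exact le_of_lt hbfV
      exact S2' (T + g) (by omega) w hwJ hH1 hH2
  -- For each anchor pair (q,j), the fixed-gap climb from d must eventually stall above b:
  -- otherwise its monotone limit is a periodic point in (a 0, b), or b itself is periodic.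
  have alpha : ∀ T : ℕ, 1 ≤ T → f^[T] b ∈ Ioo (a 0) b → ∀ q, 1 ≤ q → ∀ j, q < j →
      f^[T] b < f^[n j - n q] (f^[T] b) := by
    intro T hT hV q hq j hqj
    set V := f^[T] b with hVdef
    set g := n j - n q with hgdef
    have hg1 : 1 ≤ g := by have := hn hqj; omega
    have haj : f^[g] (a q) = a j := hgap q j (le_of_lt hqj)
    by_contra hge
    push_neg at hge
    rcases le_or_gt V (a q) with hcase | hcase
    · -- V ≤ a q : zero of φ - id on [V, a q]
      have hsub : Icc V (a q) ⊆ Icc (0:ℝ) 1 := Icc_subset_Icc (hbO T).1 (haI q).2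
      have hgC : ContinuousOn (fun y => f^[g] y - y) (Icc V (a q)) :=
        ((hCM g).1.mono hsub).sub continuousOn_id
      have h0 : (0:ℝ) ∈ Icc (f^[g] V - V) (f^[g] (a q) - a q) := by
        constructor
        · exact sub_nonpos.mpr hge
        · rw [haj]; exact sub_nonneg.mpr (le_of_lt (hmono hqj))
      obtain ⟨z, hz, hz0⟩ := intermediate_value_Icc hcase hgC h0
      have hzfix : f^[g] z = z := by
        have : f^[g] z - z = 0 := hz0
        linarith
      have hzJ : z ∈ Ioo (a 0) b :=
        ⟨lt_of_lt_of_le hV.1 hz.1, lt_of_le_of_lt hz.2 (hlt q)⟩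
      exact hnoper z hzJ g hg1 hzfix
    · -- a q < V : zero of φ - id on [a q, V]
      have hsub : Icc (a q) V ⊆ Icc (0:ℝ) 1 := Icc_subset_Icc (haI q).1 (hbO T).2
      have hgC : ContinuousOn (fun y => f^[g] y - y) (Icc (a q) V) :=
        ((hCM g).1.mono hsub).sub continuousOn_id
      have h0 : (0:ℝ) ∈ Icc (f^[g] V - V) (f^[g] (a q) - a q) := by
        constructor
        · exact sub_nonpos.mpr hge
        · rw [haj]; exact sub_nonneg.mpr (le_of_lt (hmono hqj))
      obtain ⟨z, hz, hz0⟩ := intermediate_value_Icc' (le_of_lt hcase) hgC h0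
      have hzfix : f^[g] z = z := by
        have : f^[g] z - z = 0 := hz0
        linarith
      have hzJ : z ∈ Ioo (a 0) b :=
        ⟨lt_of_lt_of_le (haJ q hq).1 hz.1, lt_of_le_of_lt hz.2 hV.2⟩
      exact hnoper z hzJ g hg1 hzfix
  -- stall: for every anchor pair, some return is pushed above b by the gap map
  have STALL : ∀ q, 1 ≤ q → ∀ j, q < j → ∃ T, 1 ≤ T ∧ f^[T] b ∈ Ioo (a 0) b ∧
      b < f^[n j - n q] (f^[T] b) := by
    intro q hq j hqj
    by_contra hno
    push_neg at hno
    set g := n j - n q with hgdef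
    have hg1 : 1 ≤ g := by have := hn hqj; omega
    set W : ℕ → ℝ := fun i => f^[t + i * g] b with hWdef
    have hWrec : ∀ i, W (i+1) = f^[g] (W i) := by
      intro i
      show f^[t + (i+1) * g] b = f^[g] (f^[t + i*g] b)
      rw [← Function.iterate_add_apply]
      congr 1
      ring
    have hW0 : W 0 = f^[t] b := by
      show f^[t + 0 * g] b = f^[t] b
      norm_num
    have key : ∀ i, W i ∈ Ioo (a 0) b ∧ W i < W (i+1) := by
      intro i
      induction i with
      | zero =>
        have hmem : W 0 ∈ Ioo (a 0) b := by rw [hW0]; exact hd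
        refine ⟨hmem, ?_⟩
        rw [hWrec 0]
        exact alpha (t + 0*g) (by omega) hmem q hq j hqj
      | succ i ih =>
        have hmem : W (i+1) ∈ Ioo (a 0) b := by
          constructor
          · exact lt_trans ih.1.1 ih.2
          · rw [hWrec i]
            have hup : f^[g] (W i) ≤ b := hno (t + i*g) (by omega) ih.1
            have hne : f^[g] (W i) ≠ b := by
              intro h
              refine S1 (t + (i+1)*g) (by omega) ?_
              rw [← hWrec i] at h
              exact h
            exact lt_of_le_of_ne hup hne
        refine ⟨hmem, ?_⟩
        rw [hWrec (i+1)]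
        exact alpha (t + (i+1)*g) (by omega) hmem q hq j hqj
    have hWmono : Monotone W := monotone_nat_of_le_succ (fun i => le_of_lt (key i).2)
    have hWbd : ∀ i, W i ≤ b := fun i => le_of_lt (key i).1.2
    set L := ⨆ i, W i with hLdef
    have hbdd : BddAbove (range W) := ⟨b, fun y ⟨i, hi⟩ => hi ▸ hWbd i⟩
    have hWtend : Tendsto W atTop (nhds L) := tendsto_atTop_ciSup hWmono hbdd
    have hL01 : L ∈ Icc (0:ℝ) 1 :=
      isClosed_Icc.mem_of_tendsto hWtend (Eventually.of_forall (fun i => hbO (t + i*g)))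
    have hφL : f^[g] L = L := by
      have h1 : Tendsto (fun i => f^[g] (W i)) atTop (nhds (f^[g] L)) := by
        have hcw : ContinuousWithinAt (f^[g]) (Icc (0:ℝ) 1) L := (hCM g).1 L hL01
        exact hcw.tendsto.comp
          (tendsto_nhdsWithin_iff.mpr ⟨hWtend, Eventually.of_forall (fun i => hbO (t + i*g))⟩)
      have h2 : Tendsto (fun i => W (i+1)) atTop (nhds L) :=
        hWtend.comp (tendsto_add_atTop_nat 1)
      have h3 : (fun i => f^[g] (W i)) = fun i => W (i+1) := by
        funext i; rw [hWrec i]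
      rw [h3] at h1
      exact tendsto_nhds_unique h1 h2
    have hLlow : a 0 < L := by
      have : W 0 ≤ L := le_ciSup hbdd 0
      calc a 0 < W 0 := (key 0).1.1
      _ ≤ L := this
    have hLhigh : L ≤ b := ciSup_le hWbd
    rcases lt_or_eq_of_le hLhigh with h | h
    · exact hnoper L ⟨hLlow, h⟩ g hg1 hφL
    · rw [h] at hφL
      exact S1 g hg1 hφL
  -- ENDGAME: use one stall to produce a pre-b point, then a residue pigeonhole.
  obtain ⟨T, hT1, hTJ, hTstall⟩ := STALL 1 (le_refl 1) 2 (by omega)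
  set γ := n 2 - n 1 with hγdef
  have hγ1 : 1 ≤ γ := by
    have h : n 1 < n 2 := hn (by omega)
    omega
  set R := f^[T] b with hRdef
  -- R > a 1
  have ha1R : a 1 < R := by
    rcases lt_trichotomy R (a 1) with h | h | h
    · exact absurd hTstall (not_lt.mpr (le_of_lt (climb T hT1 hTJ 1 (le_refl 1) 2 (by omega) h).2))
    · exfalso
      have : f^[γ] R = a 2 := by rw [h]; exact hgap 1 2 (by omega)
      rw [this] at hTstall
      exact absurd (hlt 2) (not_lt.mpr (le_of_lt hTstall))
    · exact h
  -- pre-b point w ∈ (a 1, R) with f^[γ] w = b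
  have hsub2 : Icc (a 1) R ⊆ Icc (0:ℝ) 1 := Icc_subset_Icc (haI 1).1 (hbO T).2
  have hφC : ContinuousOn (f^[γ]) (Icc (a 1) R) := (hCM γ).1.mono hsub2
  have hmemb : b ∈ Icc (f^[γ] (a 1)) (f^[γ] R) := by
    rw [hgap 1 2 (by omega)]
    exact ⟨le_of_lt (hlt 2), le_of_lt hTstall⟩
  obtain ⟨w, hw, hwb⟩ := intermediate_value_Icc (le_of_lt ha1R) hφC hmemb
  have hwR : w < R := by
    rcases lt_or_eq_of_le hw.2 with h | h
    · exact h
    · exfalso; rw [h] at hwb; rw [hwb] at hTstall; exact lt_irrefl b hTstall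
  have hwJ : w ∈ Ioo (a 0) b := by
    constructor
    · exact lt_of_lt_of_le (hmono (by omega : (0:ℕ) < 1)) hw.1
    · exact lt_trans hwR hTJ.2
  -- UP lemma: a b-orbit point above w propagates to above b after γ more steps
  have UP : ∀ s : ℕ, 1 ≤ s → w < f^[s] b → b < f^[s + γ] b := by
    intro s hs hws
    have hkey : f^[s + γ] w = f^[s] b := by
      rw [Function.iterate_add_apply, hwb]
    by_contra hle
    push_neg at hle
    have hne : f^[s + γ] b ≠ b := S1 (s + γ) (by omega)
    have hlt' : f^[s + γ] b < b := lt_of_le_of_ne hle hne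
    have := S3down (s + γ) (by omega) hlt' w hwJ
    rw [hkey] at this
    exact absurd hws (not_lt.mpr (le_of_lt this))
  -- iterated UP along multiples of γ
  have UPC : ∀ c : ℕ, b < f^[T + γ * (c+1)] b := by
    intro c
    induction c with
    | zero =>
      have h1 : T + γ * 1 = T + γ := by ring
      rw [h1]
      exact UP T hT1 (by rw [← hRdef]; exact hwR)
    | succ c ih =>
      have h2 : w < f^[T + γ * (c+1)] b := lt_trans hwJ.2 ih
      have := UP (T + γ * (c+1)) (by omega) h2
      have h3 : T + γ * (c+1) + γ = T + γ * (c+1+1) := by ring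
      rw [h3] at this
      exact this
  -- convergence of f^[T] along the a-sequence to R
  have hconv : Tendsto (fun m => f^[T] (a m)) atTop (nhds R) := by
    have hcw : ContinuousWithinAt (f^[T]) (Icc (0:ℝ) 1) b := (hCM T).1 b hbI
    exact hcw.tendsto.comp
      (tendsto_nhdsWithin_iff.mpr ⟨hlim, Eventually.of_forall haI⟩)
  -- residue pigeonhole for n mod γ
  have pigeon : ∃ ρ : ℕ, ∀ N : ℕ, ∃ m, N ≤ m ∧ n m % γ = ρ := by
    by_contra hno
    push_neg at hno
    choose N hN using hno
    set M := (Finset.range γ).sup N with hM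
    have hρlt : n M % γ < γ := Nat.mod_lt _ (by omega)
    have hle : N (n M % γ) ≤ M := Finset.le_sup (Finset.mem_range.mpr hρlt)
    exact hN (n M % γ) M hle rfl
  obtain ⟨ρ, hρ⟩ := pigeon
  -- choose anchor k in the residue class with a k > R
  have hevR : ∀ᶠ m in atTop, R < a m := hlim.eventually_const_lt hTJ.2
  obtain ⟨m₀, hm₀⟩ := eventually_atTop.mp hevR
  obtain ⟨k, hk_ge, hkρ⟩ := hρ (max m₀ 1)
  have hk1 : 1 ≤ k := le_trans (le_max_right m₀ 1) hk_ge
  have hRak : R < a k := hm₀ k (le_trans (le_max_left m₀ 1) hk_ge)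
  -- choose m in the residue class, beyond k and beyond the convergence threshold
  have hevc : ∀ᶠ m in atTop, f^[T] (a m) < a k := hconv.eventually_lt_const hRak
  obtain ⟨M₀, hM₀⟩ := eventually_atTop.mp hevc
  obtain ⟨m, hm_ge, hmρ⟩ := hρ (max M₀ (k+1))
  have hkm : k < m := lt_of_lt_of_le (Nat.lt_succ_self k) (le_trans (le_max_right M₀ (k+1)) hm_ge)
  have hmM₀ : M₀ ≤ m := le_trans (le_max_left M₀ (k+1)) hm_ge
  -- divisibility
  have hnkm : n k < n m := hn hkm
  have hdvd : γ ∣ (n m - n k) := by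
    have hmodeq : n k ≡ n m [MOD γ] := by
      unfold Nat.ModEq
      rw [hkρ, hmρ]
    exact (Nat.modEq_iff_dvd' (le_of_lt hnkm)).mp hmodeq
  obtain ⟨c, hc⟩ := hdvd
  have hc1 : 1 ≤ c := by
    rcases Nat.eq_zero_or_pos c with h | h
    · exfalso; rw [h, Nat.mul_zero] at hc; omega
    · exact h
  -- the down fact at the aligned anchor
  have hdown : f^[T + (n m - n k)] b < b := by
    by_contra hle
    push_neg at hle
    have hne : f^[T + (n m - n k)] b ≠ b := S1 _ (by omega)
    have hgt : b < f^[T + (n m - n k)] b := lt_of_le_of_ne hle (Ne.symm hne)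
    have := S3up (T + (n m - n k)) (by omega) hgt (a k) (haJ k hk1)
    have hcomp : f^[T + (n m - n k)] (a k) = f^[T] (a m) := by
      rw [Function.iterate_add_apply, hgap k m (le_of_lt hkm)]
    rw [hcomp] at this
    exact absurd (hM₀ m hmM₀) (not_lt.mpr (le_of_lt this))
  -- the up fact at the same time
  have hup : b < f^[T + (n m - n k)] b := by
    have := UPC (c - 1)
    have hcc : γ * (c - 1 + 1) = n m - n k := by
      rw [hc]
      congr 1
      omega
    rw [hcc] at this
    exact this
  exact absurd hup (not_lt.mpr (le_of_lt hdown))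
end

section
/- Let f : [0,1] → [0,1] be continuous and let b ∈ [0,1] be a recurrent point, i.e., there is a sequence n_k → ∞ with f^{n_k}(b) → b. Then b lies in the closure of the set of periodic points of f. -/
open Set Filter

open Topology

private lemma iterContOn {f : ℝ → ℝ} (hf : ContinuousOn f (Icc (0:ℝ) 1))
    (hm : MapsTo f (Icc (0:ℝ) 1) (Icc (0:ℝ) 1)) :
    ∀ m, ContinuousOn f^[m] (Icc (0:ℝ) 1) := by
  intro m
  induction m with
  | zero => simpa using continuousOn_id
  | succ k ih =>
      rw [Function.iterate_succ]
      exact ih.comp hf hm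

private lemma no_cross {f : ℝ → ℝ} (hf : ContinuousOn f (Icc (0:ℝ) 1))
    (hm : MapsTo f (Icc (0:ℝ) 1) (Icc (0:ℝ) 1))
    {m : ℕ} {α β x₁ x₂ : ℝ} (hsub : Icc α β ⊆ Icc (0:ℝ) 1)
    (hfree : ∀ y ∈ Icc α β, f^[m] y ≠ y)
    (h₁ : x₁ ∈ Icc α β) (h₂ : x₂ ∈ Icc α β)
    (hlt : f^[m] x₁ < x₁) (hgt : x₂ < f^[m] x₂) : False := by
  set g : ℝ → ℝ := fun y => f^[m] y - y with hg
  have husub : uIcc x₁ x₂ ⊆ Icc α β := Set.ordConnected_Icc.uIcc_subset h₁ h₂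
  have hgc : ContinuousOn g (uIcc x₁ x₂) :=
    (((iterContOn hf hm m).mono (husub.trans hsub)).sub continuousOn_id)
  have h0 : (0:ℝ) ∈ uIcc (g x₁) (g x₂) := by
    rw [Set.mem_uIcc]
    left
    constructor <;> simp [hg] <;> linarith
  obtain ⟨y, hy, hy0⟩ := intermediate_value_uIcc hgc h0
  exact hfree y (husub hy) (by simpa [hg, sub_eq_zero] using hy0)

private lemma core (f : ℝ → ℝ) (hf : ContinuousOn f (Icc (0:ℝ) 1))
    (hmaps : MapsTo f (Icc (0:ℝ) 1) (Icc (0:ℝ) 1))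
    (b : ℝ) (hb : b ∈ Icc (0:ℝ) 1) (ε₀ : ℝ) (hε₀ : 0 < ε₀)
    (hgap : ∀ y ∈ Icc (0:ℝ) 1, ∀ m, 1 ≤ m → f^[m] y = y → ¬(b - ε₀ < y ∧ y < b + ε₀))
    (hret : ∀ δ : ℝ, 0 < δ → ∃ m, 1 ≤ m ∧ b < f^[m] b ∧ f^[m] b < b + δ) : False := by
  classical
  obtain ⟨hb0, hb1⟩ := hb
  have horbit : ∀ m, f^[m] b ∈ Icc (0:ℝ) 1 := fun m => (hmaps.iterate m) ⟨hb0, hb1⟩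
  have hbP : ∀ m, 1 ≤ m → f^[m] b ≠ b := by
    intro m hm1 he
    exact hgap b ⟨hb0, hb1⟩ m hm1 he ⟨by linarith, by linarith⟩
  -- RET: deep returns with arbitrarily large times
  have RET : ∀ δ : ℝ, 0 < δ → ∀ T₀ : ℕ, ∃ T, T₀ ≤ T ∧ 1 ≤ T ∧ b < f^[T] b ∧ f^[T] b < b + δ := by
    intro δ hδ T₀
    set S : Finset ℕ := (Finset.range T₀).filter (fun i => b < f^[i] b) with hS
    by_cases hSne : S.Nonempty
    · set δ' := min δ (S.inf' hSne (fun i => f^[i] b - b)) with hδ'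
      have hδ'pos : 0 < δ' := by
        apply lt_min hδ
        rw [Finset.lt_inf'_iff]
        intro i hi
        rw [hS, Finset.mem_filter] at hi
        linarith [hi.2]
      obtain ⟨m, hm1, hmlo, hmhi⟩ := hret δ' hδ'pos
      refine ⟨m, ?_, hm1, hmlo, lt_of_lt_of_le hmhi (by simp [hδ'])⟩
      by_contra hlt'
      push_neg at hlt'
      have hmS : m ∈ S := by
        rw [hS, Finset.mem_filter, Finset.mem_range]
        exact ⟨hlt', hmlo⟩
      have h1 : δ' ≤ f^[m] b - b :=
        le_trans (min_le_right _ _) (Finset.inf'_le _ hmS)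
      linarith
    · obtain ⟨m, hm1, hmlo, hmhi⟩ := hret δ hδ
      refine ⟨m, ?_, hm1, hmlo, hmhi⟩
      by_contra h
      push_neg at h
      exact hSne ⟨m, by rw [hS, Finset.mem_filter, Finset.mem_range]; exact ⟨h, hmlo⟩⟩
  -- Pabove nonempty
  set PS : Set ℝ := {y : ℝ | (y ∈ Icc (0:ℝ) 1 ∧ ∃ m, 1 ≤ m ∧ f^[m] y = y) ∧ b < y} with hPS
  have hPSmem : ∀ y, y ∈ PS ↔ ((y ∈ Icc (0:ℝ) 1 ∧ ∃ m, 1 ≤ m ∧ f^[m] y = y) ∧ b < y) := by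
    intro y; rw [hPS]; rfl
  have PabNE : PS.Nonempty := by
    by_contra hemp
    rw [Set.not_nonempty_iff_eq_empty] at hemp
    obtain ⟨m, hm1, hmlo, _⟩ := hret 1 one_pos
    have hblt1 : b < 1 := lt_of_lt_of_le hmlo (horbit m).2
    have hfree : ∀ y ∈ Icc b 1, f^[m] y ≠ y := by
      intro y hy he
      have hyI : y ∈ Icc (0:ℝ) 1 := ⟨le_trans hb0 hy.1, hy.2⟩
      rcases eq_or_lt_of_le hy.1 with h | h
      · exact hbP m hm1 (h ▸ he)
      · have : y ∈ PS := (hPSmem y).2 ⟨⟨hyI, m, hm1, he⟩, h⟩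
        rw [hemp] at this; exact this
    have h1lt : f^[m] 1 < 1 := by
      have h1I : (1:ℝ) ∈ Icc (0:ℝ) 1 := ⟨zero_le_one, le_refl _⟩
      rcases lt_or_eq_of_le ((hmaps.iterate m) h1I).2 with h | h
      · exact h
      · exact absurd h (hfree 1 ⟨le_of_lt hblt1, le_refl _⟩)
    exact no_cross hf hmaps (fun y hy => ⟨le_trans hb0 hy.1, hy.2⟩) hfree
      ⟨le_of_lt hblt1, le_refl _⟩ ⟨le_refl _, hb1⟩ h1lt hmlo
  -- lam := inf of periodic points above b
  have hbdd : BddBelow PS := ⟨b, fun y hy => le_of_lt ((hPSmem y).1 hy).2⟩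
  set lam := sInf PS with hlamdef
  have hlam_lb : ∀ q ∈ PS, b + ε₀ ≤ q := by
    intro q hq
    obtain ⟨⟨hqI, m, hm1, hqfix⟩, hqb⟩ := (hPSmem q).1 hq
    have := hgap q hqI m hm1 hqfix
    by_contra hcon
    push_neg at hcon
    exact this ⟨by linarith, hcon⟩
  have hlamge : b + ε₀ ≤ lam := le_csInf PabNE hlam_lb
  have hblam : b < lam := by linarith
  have hlamle1 : lam ≤ 1 := by
    obtain ⟨q₀, hq₀⟩ := PabNE
    exact le_trans (csInf_le hbdd hq₀) ((hPSmem q₀).1 hq₀).1.1.2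
  have hlam0 : 0 ≤ lam := le_trans hb0 (le_of_lt hblam)
  -- no fixed points of any iterate in [b, lam)
  have hFPF : ∀ y, b ≤ y → y < lam → ∀ m, 1 ≤ m → f^[m] y ≠ y := by
    intro y hyb hylam m hm1 he
    rcases eq_or_lt_of_le hyb with h | h
    · exact hbP m hm1 (h ▸ he)
    · have hyI : y ∈ Icc (0:ℝ) 1 := ⟨le_trans hb0 hyb, le_trans (le_of_lt hylam) hlamle1⟩
      have : y ∈ PS := (hPSmem y).2 ⟨⟨hyI, m, hm1, he⟩, h⟩
      exact absurd (csInf_le hbdd this) (not_le.2 hylam)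
  -- directional sign transport
  have dirPos : ∀ m, 1 ≤ m → b < f^[m] b → ∀ y, b ≤ y → y < lam → y < f^[m] y := by
    intro m hm1 hmb y hyb hylam
    have hsub : Icc b y ⊆ Icc (0:ℝ) 1 :=
      fun z hz => ⟨le_trans hb0 hz.1, le_trans hz.2 (le_trans (le_of_lt hylam) hlamle1)⟩
    have hfree : ∀ z ∈ Icc b y, f^[m] z ≠ z :=
      fun z hz => hFPF z hz.1 (lt_of_le_of_lt hz.2 hylam) m hm1
    rcases lt_trichotomy (f^[m] y) y with h | h | h
    · exact absurd (no_cross hf hmaps hsub hfree ⟨hyb, le_refl _⟩ ⟨le_refl _, hyb⟩ h hmb) id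
    · exact absurd h (hfree y ⟨hyb, le_refl _⟩)
    · exact h
  have dirNeg : ∀ m, 1 ≤ m → ∀ u, b ≤ u → u < lam → f^[m] u < u →
      ∀ y, b ≤ y → y < lam → f^[m] y < y := by
    intro m hm1 u hub hulam humlt y hyb hylam
    set θ := max u y with hθ
    have hθlam : θ < lam := max_lt hulam hylam
    have hsub : Icc b θ ⊆ Icc (0:ℝ) 1 :=
      fun z hz => ⟨le_trans hb0 hz.1, le_trans hz.2 (le_trans (le_of_lt hθlam) hlamle1)⟩
    have hfree : ∀ z ∈ Icc b θ, f^[m] z ≠ z :=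
      fun z hz => hFPF z hz.1 (lt_of_le_of_lt hz.2 hθlam) m hm1
    rcases lt_trichotomy (f^[m] y) y with h | h | h
    · exact h
    · exact absurd h (hfree y ⟨hyb, le_max_right u y⟩)
    · exact absurd (no_cross hf hmaps hsub hfree ⟨hub, le_max_left u y⟩
        ⟨hyb, le_max_right u y⟩ humlt h) id
  -- base return E with value W₀
  obtain ⟨E, hE1, hWlo, hWhi⟩ := hret ε₀ hε₀
  set W₀ := f^[E] b with hW₀
  have hW₀lam : W₀ < lam := by rw [hW₀]; linarith
  have hW₀b : b < W₀ := hWlo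
  -- ENDGAME
  have endgame : ∀ q w π, 1 ≤ π → f^[π] q = q → lam ≤ q → b ≤ w → w < lam →
      f^[E] w = q → False := by
    intro q w π hπ1 hqfix hlamq hwb hwlam hEw
    -- strictly decreasing return sequence with increasing times
    have step : ∀ t : ℕ, (1 ≤ t ∧ b < f^[t] b ∧ f^[t] b ≤ W₀) →
        ∃ t', (1 ≤ t' ∧ b < f^[t'] b ∧ f^[t'] b ≤ W₀) ∧ t < t' ∧ f^[t'] b < f^[t] b := by
      intro t ⟨ht1, htlo, hthi⟩
      obtain ⟨T, hT₀, hT1, hTlo, hThi⟩ := RET (f^[t] b - b) (by linarith) (t+1)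
      refine ⟨T, ⟨hT1, hTlo, ?_⟩, by omega, by linarith⟩
      linarith
    set Pred : ℕ → Prop := fun t => 1 ≤ t ∧ b < f^[t] b ∧ f^[t] b ≤ W₀ with hPred
    set gstep : {t : ℕ // Pred t} → {t : ℕ // Pred t} :=
      fun p => ⟨(step p.1 p.2).choose, (step p.1 p.2).choose_spec.1⟩ with hgstep
    set ts : ℕ → {t : ℕ // Pred t} :=
      fun k => gstep^[k] ⟨E, hE1, hWlo, le_refl _⟩ with hts
    have htsucc : ∀ k, ts (k+1) = gstep (ts k) := by
      intro k
      rw [hts]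
      exact Function.iterate_succ_apply' gstep k _
    have htlt : ∀ k, (ts k).1 < (ts (k+1)).1 := by
      intro k
      rw [htsucc k]
      exact (step (ts k).1 (ts k).2).choose_spec.2.1
    have hvlt : ∀ k, f^[(ts (k+1)).1] b < f^[(ts k).1] b := by
      intro k
      rw [htsucc k]
      exact (step (ts k).1 (ts k).2).choose_spec.2.2
    have htmono : StrictMono (fun k => (ts k).1) := strictMono_nat_of_lt_succ htlt
    have hvanti : StrictAnti (fun k => f^[(ts k).1] b) := strictAnti_nat_of_succ_lt hvlt
    -- pigeonhole mod π
    obtain ⟨k₁, hk₁, k₂, hk₂, hkne, hkeq⟩ :=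
      Finset.exists_ne_map_eq_of_card_lt_of_maps_to
        (s := Finset.range (π+1)) (t := Finset.range π)
        (by simp) (fun k _ => Finset.mem_range.2 (Nat.mod_lt _ (by omega)))
        (f := fun k => (ts k).1 % π)
    -- wlog k₁ < k₂
    have main : ∀ i j : ℕ, i < j → (ts i).1 % π = (ts j).1 % π → False := by
      intro i j hij hmod
      set t := (ts i).1 with htdef
      set t' := (ts j).1 with ht'def
      have htt' : t < t' := htmono hij
      set M := t' - t with hM
      have hM1 : 1 ≤ M := by omega
      have hdvd : π ∣ M := (Nat.modEq_iff_dvd' (le_of_lt htt')).1 hmod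
      have hMW : f^[M] (f^[t] b) = f^[t'] b := by
        rw [← Function.iterate_add_apply]
        congr 1
        omega
      have hMdec : f^[M] (f^[t] b) < f^[t] b := by
        rw [hMW]; exact hvanti hij
      have htb : b < f^[t] b := (ts i).2.2.1
      have htW : f^[t] b ≤ W₀ := (ts i).2.2.2
      have htlam : f^[t] b < lam := lt_of_le_of_lt htW hW₀lam
      have hMneg : ∀ y, b ≤ y → y < lam → f^[M] y < y :=
        dirNeg M hM1 (f^[t] b) (le_of_lt htb) htlam hMdec
      -- dive
      set d : ℕ → ℝ := fun l => f^[l*M] W₀ with hd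
      have hd0 : d 0 = W₀ := by simp [hd]
      have hdsucc : ∀ l, d (l+1) = f^[M] (d l) := by
        intro l
        show f^[(l+1)*M] W₀ = f^[M] (f^[l*M] W₀)
        have h1 : (l+1)*M = M + l*M := by ring
        rw [h1]
        exact Function.iterate_add_apply f M (l*M) W₀
      have hdorb : ∀ l, d l = f^[l*M + E] b := by
        intro l
        show f^[l*M] W₀ = f^[l*M + E] b
        rw [hW₀]
        exact (Function.iterate_add_apply f (l*M) E b).symm
      have hcross : ∃ l, d l ≤ b := by
        by_contra hno
        push_neg at hno
        have hbnd : ∀ l, d l ≤ W₀ := by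
          intro l
          induction l with
          | zero => rw [hd0]
          | succ k ih =>
              rw [hdsucc k]
              exact le_trans (le_of_lt (hMneg (d k) (le_of_lt (hno k))
                (lt_of_le_of_lt ih hW₀lam))) ih
        have hstep : ∀ l, d (l+1) < d l := by
          intro l
          rw [hdsucc l]
          exact hMneg (d l) (le_of_lt (hno l)) (lt_of_le_of_lt (hbnd l) hW₀lam)
        have hanti : StrictAnti d := strictAnti_nat_of_succ_lt hstep
        have hbb : BddBelow (Set.range d) := by
          refine ⟨b, ?_⟩
          rintro x ⟨l, rfl⟩
          exact le_of_lt (hno l)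
        have hL := tendsto_atTop_ciInf hanti.antitone hbb
        set L := ⨅ l, d l with hLdef
        have hLb : b ≤ L := le_ciInf (fun l => le_of_lt (hno l))
        have hLlam : L < lam := lt_of_le_of_lt (le_trans (ciInf_le hbb 0) (le_of_eq hd0)) hW₀lam
        have hdIcc : ∀ l, d l ∈ Icc (0:ℝ) 1 := by
          intro l; rw [hdorb]; exact horbit _
        have hLIcc : L ∈ Icc (0:ℝ) 1 :=
          isClosed_Icc.mem_of_tendsto hL (Eventually.of_forall hdIcc)
        have hcw : ContinuousWithinAt f^[M] (Icc (0:ℝ) 1) L :=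
          (iterContOn hf hmaps M) L hLIcc
        have h1 : Tendsto (fun l => f^[M] (d l)) atTop (𝓝 (f^[M] L)) :=
          hcw.tendsto.comp (tendsto_nhdsWithin_iff.2 ⟨hL, Eventually.of_forall hdIcc⟩)
        have h2 : Tendsto (fun l => d (l+1)) atTop (𝓝 L) :=
          hL.comp (tendsto_add_atTop_nat 1)
        have hfix : f^[M] L = L := by
          apply tendsto_nhds_unique _ h2
          have : (fun l => d (l+1)) = fun l => f^[M] (d l) := by
            funext l; exact hdsucc l
          rw [this]
          exact h1
        exact hFPF L hLb hLlam M hM1 hfix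
      obtain ⟨l₀, hl₀⟩ := hcross
      rcases eq_or_lt_of_le hl₀ with hdb | hdb
      · exact hbP (l₀*M + E) (by omega) (by rw [← hdorb]; exact hdb)
      -- q fixed under f^[l₀*M]
      obtain ⟨c, hc⟩ := hdvd
      have hqfix2 : f^[l₀*M] q = q := by
        have : l₀ * M = π * (l₀ * c) := by rw [hc]; ring
        rw [this, Function.iterate_mul]
        exact Function.IsFixedPt.iterate hqfix (l₀*c)
      set N := l₀*M + E with hN
      have hN1 : 1 ≤ N := by omega
      have hNb : f^[N] b < b := by rw [← hdorb]; exact hdb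
      have hNw : f^[N] w = q := by
        rw [hN, Function.iterate_add_apply, hEw, hqfix2]
      -- final crossing
      have hsub : Icc b w ⊆ Icc (0:ℝ) 1 :=
        fun z hz => ⟨le_trans hb0 hz.1, le_trans hz.2 (le_trans (le_of_lt hwlam) hlamle1)⟩
      have hfree : ∀ z ∈ Icc b w, f^[N] z ≠ z :=
        fun z hz => hFPF z hz.1 (lt_of_le_of_lt hz.2 hwlam) N hN1
      exact no_cross hf hmaps hsub hfree ⟨le_refl _, hwb⟩ ⟨hwb, le_refl _⟩ hNb
        (by rw [hNw]; exact lt_of_lt_of_le hwlam hlamq)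
    rcases Ne.lt_or_gt hkne with h | h
    · exact main k₁ k₂ h hkeq
    · exact main k₂ k₁ h hkeq.symm
  -- main case split
  have hcontE : ContinuousOn f^[E] (Icc (0:ℝ) 1) := iterContOn hf hmaps E
  by_cases hD1 : ∃ η, η ∈ Icc b lam ∧ lam < f^[E] η
  · -- D1
    obtain ⟨η, hη, hv⟩ := hD1
    have hsubη : Icc b η ⊆ Icc (0:ℝ) 1 :=
      fun z hz => ⟨le_trans hb0 hz.1, le_trans hz.2 (le_trans hη.2 hlamle1)⟩
    by_cases hlamP : ∃ m, 1 ≤ m ∧ f^[m] lam = lam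
    · -- lam periodic : q := lam
      obtain ⟨π, hπ1, hπfix⟩ := hlamP
      have hivt : lam ∈ f^[E] '' (Icc b η) := by
        apply intermediate_value_Icc hη.1 (hcontE.mono hsubη)
        exact ⟨le_of_lt hW₀lam, le_of_lt hv⟩
      obtain ⟨w, hw, hwE⟩ := hivt
      have hwlam : w < lam := by
        rcases lt_or_eq_of_le (le_trans hw.2 hη.2) with h | h
        · exact h
        · exfalso
          have hηw : η = lam := le_antisymm hη.2 (h ▸ hw.2)
          rw [hηw] at hv
          rw [h] at hwE
          rw [hwE] at hv
          exact lt_irrefl _ hv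
      exact endgame lam w π hπ1 hπfix (le_refl _) hw.1 hwlam hwE
    · -- lam not periodic: take q ∈ PS with q < f^[E] η
      have hlt : sInf PS < f^[E] η := lt_of_le_of_lt (le_of_eq hlamdef.symm) hv
      obtain ⟨qq, hqqPS, hqqlt⟩ := exists_lt_of_csInf_lt PabNE hlt
      obtain ⟨⟨hqqI, π, hπ1, hπfix⟩, hqqb⟩ := (hPSmem qq).1 hqqPS
      have hlamqq : lam ≤ qq := csInf_le hbdd hqqPS
      have hivt : qq ∈ f^[E] '' (Icc b η) := by
        apply intermediate_value_Icc hη.1 (hcontE.mono hsubη)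
        exact ⟨by linarith, le_of_lt hqqlt⟩
      obtain ⟨w, hw, hwE⟩ := hivt
      have hwlam : w < lam := by
        rcases lt_or_eq_of_le (le_trans hw.2 hη.2) with h | h
        · exact h
        · exfalso
          have hηlam : η = lam := le_antisymm hη.2 (h ▸ hw.2)
          have hwη : w = η := le_antisymm hw.2 (by rw [hηlam, ← h])
          rw [hwη] at hwE
          rw [hwE] at hqqlt
          exact lt_irrefl _ hqqlt
      exact endgame qq w π hπ1 hπfix hlamqq hw.1 hwlam hwE
  · -- D2
    push_neg at hD1
    have hlamfix : f^[E] lam = lam := by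
      rcases lt_trichotomy (f^[E] lam) lam with h | h | h
      · exfalso
        have hsub : Icc b lam ⊆ Icc (0:ℝ) 1 :=
          fun z hz => ⟨le_trans hb0 hz.1, le_trans hz.2 hlamle1⟩
        have hfree : ∀ z ∈ Icc b lam, f^[E] z ≠ z := by
          intro z hz he
          rcases lt_or_eq_of_le hz.2 with h2 | h2
          · exact hFPF z hz.1 h2 E hE1 he
          · rw [h2] at he; exact absurd he (ne_of_lt h)
        exact no_cross hf hmaps hsub hfree ⟨le_of_lt hblam, le_refl _⟩
          ⟨le_refl _, le_of_lt hblam⟩ h hWlo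
      · exact h
      · exact absurd h (not_lt.2 (hD1 lam ⟨le_of_lt hblam, le_refl _⟩))
    by_cases hD2a : ∃ η, b ≤ η ∧ η < lam ∧ lam ≤ f^[E] η
    · obtain ⟨η, hηb, hηlam, hηv⟩ := hD2a
      have hsubη : Icc b η ⊆ Icc (0:ℝ) 1 :=
        fun z hz => ⟨le_trans hb0 hz.1, le_trans hz.2 (le_trans (le_of_lt hηlam) hlamle1)⟩
      have hivt : lam ∈ f^[E] '' (Icc b η) := by
        apply intermediate_value_Icc hηb (hcontE.mono hsubη)
        exact ⟨le_of_lt hW₀lam, hηv⟩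
      obtain ⟨w, hw, hwE⟩ := hivt
      exact endgame lam w E hE1 hlamfix (le_refl _) hw.1 (lt_of_le_of_lt hw.2 hηlam) hwE
    · -- D2b : the invariant interval case
      push_neg at hD2a
      have hD2b : ∀ η, b ≤ η → η < lam → f^[E] η < lam := hD2a
      set z : ℕ → ℝ := fun s => (f^[E])^[s] b with hz
      have hzsucc : ∀ s, z (s+1) = f^[E] (z s) := by
        intro s
        rw [hz]
        exact Function.iterate_succ_apply' (f^[E]) s b
      have hziter : ∀ s, z s = f^[E * s] b := by
        intro s
        rw [hz, Function.iterate_mul]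
      have hzIcc : ∀ s, z s ∈ Icc (0:ℝ) 1 := by
        intro s; rw [hziter]; exact horbit _
      have hzmem : ∀ s, b ≤ z s ∧ z s < lam := by
        intro s
        induction s with
        | zero => exact ⟨le_refl _, hblam⟩
        | succ k ih =>
            rw [hzsucc k]
            constructor
            · rcases eq_or_lt_of_le ih.1 with h | h
              · rw [← h]; exact le_of_lt hWlo
              · exact le_of_lt (lt_trans h (dirPos E hE1 hWlo (z k) ih.1 ih.2))
            · exact hD2b (z k) ih.1 ih.2
      have hzmono : StrictMono z := by
        apply strictMono_nat_of_lt_succ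
        intro s
        rw [hzsucc s]
        exact dirPos E hE1 hWlo (z s) (hzmem s).1 (hzmem s).2
      have hbddz : BddAbove (Set.range z) := by
        refine ⟨lam, ?_⟩
        rintro x ⟨s, rfl⟩
        exact le_of_lt (hzmem s).2
      have hLt := tendsto_atTop_ciSup hzmono.monotone hbddz
      set L := ⨆ s, z s with hLdef
      have hLlam : L ≤ lam := ciSup_le (fun s => le_of_lt (hzmem s).2)
      have hLb : b < L := by
        have h1 : z 1 ≤ L := le_ciSup hbddz 1
        have h2 : b < z 1 := by
          have := hzsucc 0
          simp [hz] at this ⊢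
          exact hWlo
        linarith
      have hLIcc : L ∈ Icc (0:ℝ) 1 :=
        isClosed_Icc.mem_of_tendsto hLt (Eventually.of_forall hzIcc)
      have hLfix : f^[E] L = L := by
        have hcw : ContinuousWithinAt f^[E] (Icc (0:ℝ) 1) L := hcontE L hLIcc
        have h1 : Tendsto (fun s => f^[E] (z s)) atTop (𝓝 (f^[E] L)) :=
          hcw.tendsto.comp (tendsto_nhdsWithin_iff.2 ⟨hLt, Eventually.of_forall hzIcc⟩)
        have h2 : Tendsto (fun s => z (s+1)) atTop (𝓝 L) :=
          hLt.comp (tendsto_add_atTop_nat 1)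
        apply tendsto_nhds_unique _ h2
        have : (fun s => z (s+1)) = fun s => f^[E] (z s) := by
          funext s; exact hzsucc s
        rw [this]
        exact h1
      have hLeq : L = lam := by
        rcases lt_or_eq_of_le hLlam with h | h
        · exact absurd hLfix (hFPF L (le_of_lt hLb) h E hE1)
        · exact h
      -- finitary continuity/pigeonhole argument: some f^[r] lam = b
      have hlamIcc : lam ∈ Icc (0:ℝ) 1 := ⟨hlam0, hlamle1⟩
      have hr : ∃ r, r < E ∧ f^[r] lam = b := by
        by_contra hno
        push_neg at hno
        have hEne : (Finset.range E).Nonempty := ⟨0, Finset.mem_range.2 (by omega)⟩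
        set γ := (Finset.range E).inf' hEne (fun r => |f^[r] lam - b|) with hγ
        have hγpos : 0 < γ := by
          rw [hγ, Finset.lt_inf'_iff]
          intro r hr
          have : f^[r] lam ≠ b := hno r (Finset.mem_range.1 hr)
          exact abs_pos.2 (sub_ne_zero.2 this)
        have hδr : ∀ r : ℕ, ∃ δr : ℝ, 0 < δr ∧ ∀ y ∈ Icc (0:ℝ) 1,
            |y - lam| < δr → |f^[r] y - f^[r] lam| < γ/2 := by
          intro r
          have hc : ContinuousWithinAt f^[r] (Icc (0:ℝ) 1) lam :=
            (iterContOn hf hmaps r) lam hlamIcc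
          rw [Metric.continuousWithinAt_iff] at hc
          obtain ⟨δr, hδrpos, hδrp⟩ := hc (γ/2) (by linarith)
          refine ⟨δr, hδrpos, ?_⟩
          intro y hy hdist
          have := hδrp hy (by rwa [Real.dist_eq])
          rwa [Real.dist_eq] at this
        choose δr hδrpos hδrp using hδr
        set δs := (Finset.range E).inf' hEne δr with hδs
        have hδspos : 0 < δs := by
          rw [hδs, Finset.lt_inf'_iff]
          intro r _
          exact hδrpos r
        -- pick s₀ with z s₀ > lam - δs
        have hex : ∃ s₀, lam - δs < z s₀ := by
          have : lam - δs < L := by rw [hLeq]; linarith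
          rw [hLdef] at this
          exact exists_lt_of_lt_ciSup this
        obtain ⟨s₀, hs₀⟩ := hex
        -- deep return beyond (s₀+1)*E
        obtain ⟨T, hT₀, hT1, hTlo, hThi⟩ := RET (γ/2) (by linarith) ((s₀+1) * E)
        set r := T % E with hrdef
        set s := T / E with hsdef
        have hrE : r < E := Nat.mod_lt _ (by omega)
        have hsge : s₀ ≤ s := by
          have h1 : (s₀+1) * E ≤ T := hT₀
          have h2 : s₀ + 1 ≤ T / E := (Nat.le_div_iff_mul_le (by omega)).2 h1
          omega
        have hzs : lam - δs < z s := lt_of_lt_of_le hs₀ (hzmono.monotone hsge)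
        have hzdist : |z s - lam| < δs := by
          rw [abs_lt]
          constructor
          · linarith
          · linarith [(hzmem s).2]
        have key : f^[r] (z s) = f^[T] b := by
          rw [hziter]
          rw [← Function.iterate_add_apply]
          congr 1
          simp only [hrdef, hsdef]
          have h5 := Nat.div_add_mod T E
          omega
        have h1 : |f^[r] (z s) - f^[r] lam| < γ/2 := by
          apply hδrp r (z s) (hzIcc s)
          exact lt_of_lt_of_le hzdist (Finset.inf'_le _ (Finset.mem_range.2 hrE))
        have h2 : |f^[T] b - b| < γ/2 := by
          rw [abs_lt]
          constructor <;> linarith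
        have h3 : |f^[r] lam - b| < γ := by
          rw [key] at h1
          calc |f^[r] lam - b| = |(f^[r] lam - f^[T] b) + (f^[T] b - b)| := by ring_nf
            _ ≤ |f^[r] lam - f^[T] b| + |f^[T] b - b| := abs_add_le _ _
            _ = |f^[T] b - f^[r] lam| + |f^[T] b - b| := by rw [abs_sub_comm]
            _ < γ/2 + γ/2 := by exact add_lt_add h1 h2
            _ = γ := by ring
        have h4 : γ ≤ |f^[r] lam - b| :=
          Finset.inf'_le _ (Finset.mem_range.2 hrE)
        linarith
      obtain ⟨r, hrE, hrb⟩ := hr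
      have hr1 : 1 ≤ r := by
        rcases Nat.eq_zero_or_pos r with h | h
        · exfalso
          rw [h] at hrb
          simp at hrb
          exact absurd hrb (ne_of_gt hblam)
        · exact h
      have hbper : f^[E] b = b := by
        conv_lhs => rw [← hrb]
        rw [← Function.iterate_add_apply]
        have hEr : E + r = r + E := by omega
        rw [hEr, Function.iterate_add_apply, hlamfix, hrb]
      exact hbP E hE1 hbper

theorem recurrent_in_closure_periodic
    (f : ℝ → ℝ) (hf : ContinuousOn f (Icc 0 1))
    (hmaps : MapsTo f (Icc 0 1) (Icc 0 1))
    (b : ℝ) (hb : b ∈ Icc (0:ℝ) 1)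
    (n : ℕ → ℕ) (hn : Tendsto n atTop atTop)
    (hlim : Tendsto (fun k => f^[n k] b) atTop (nhds b)) :
    b ∈ closure {y : ℝ | y ∈ Icc (0:ℝ) 1 ∧ ∃ m ≥ 1, f^[m] y = y} := by
  classical
  by_contra hcl
  obtain ⟨hb0, hb1⟩ := hb
  set S : Set ℝ := {y : ℝ | y ∈ Icc (0:ℝ) 1 ∧ ∃ m ≥ 1, f^[m] y = y} with hS
  obtain ⟨ε₀, hε₀, hball⟩ := Metric.isOpen_iff.1 isClosed_closure.isOpen_compl b hcl
  have hgap : ∀ y ∈ Icc (0:ℝ) 1, ∀ m, 1 ≤ m → f^[m] y = y → ¬(b - ε₀ < y ∧ y < b + ε₀) := by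
    intro y hy m hm1 hfix ⟨h1, h2⟩
    have hyb : y ∈ Metric.ball b ε₀ := by
      rw [Metric.mem_ball, Real.dist_eq, abs_lt]
      constructor <;> linarith
    have hyS : y ∈ S := ⟨hy, m, hm1, hfix⟩
    exact hball hyb (subset_closure hyS)
  have hbP : ∀ m, 1 ≤ m → f^[m] b ≠ b := by
    intro m hm1 he
    exact hgap b ⟨hb0, hb1⟩ m hm1 he ⟨by linarith, by linarith⟩
  have hretAny : ∀ δ : ℝ, 0 < δ → ∃ m, 1 ≤ m ∧ f^[m] b ≠ b ∧ b - δ < f^[m] b ∧ f^[m] b < b + δ := by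
    intro δ hδ
    have h1 : ∀ᶠ k in atTop, dist (f^[n k] b) b < δ :=
      (Metric.tendsto_nhds.1 hlim) δ hδ
    have h2 : ∀ᶠ k in atTop, 1 ≤ n k := hn.eventually_ge_atTop 1
    obtain ⟨k, hk1, hk2⟩ := (h1.and h2).exists
    refine ⟨n k, hk2, hbP (n k) hk2, ?_, ?_⟩
    · rw [Real.dist_eq, abs_lt] at hk1; linarith [hk1.1]
    · rw [Real.dist_eq, abs_lt] at hk1; linarith [hk1.2]
  have hside : (∀ δ : ℝ, 0 < δ → ∃ m, 1 ≤ m ∧ b < f^[m] b ∧ f^[m] b < b + δ) ∨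
      (∀ δ : ℝ, 0 < δ → ∃ m, 1 ≤ m ∧ b - δ < f^[m] b ∧ f^[m] b < b) := by
    by_contra h
    push_neg at h
    obtain ⟨⟨δ₁, hδ₁, h₁⟩, ⟨δ₂, hδ₂, h₂⟩⟩ := h
    obtain ⟨m, hm1, hmne, hmlo, hmhi⟩ := hretAny (min δ₁ δ₂) (lt_min hδ₁ hδ₂)
    have hl := min_le_left δ₁ δ₂
    have hr := min_le_right δ₁ δ₂
    rcases lt_or_gt_of_ne hmne with hlt | hgt
    · have := h₂ m hm1 (by linarith)
      linarith
    · have := h₁ m hm1 hgt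
      linarith
  rcases hside with hA | hB
  · exact core f hf hmaps b ⟨hb0, hb1⟩ ε₀ hε₀ hgap hA
  · -- reflection
    set g : ℝ → ℝ := fun x => 1 - f (1 - x) with hg
    have hrefl : MapsTo (fun x : ℝ => 1 - x) (Icc (0:ℝ) 1) (Icc (0:ℝ) 1) := by
      intro x hx
      rw [mem_Icc] at hx ⊢
      constructor <;> [skip; skip] <;> simp <;> linarith [hx.1, hx.2]
    have hgf : ContinuousOn g (Icc (0:ℝ) 1) := by
      apply (continuous_const.sub continuous_id).comp_continuousOn
      exact hf.comp (continuous_const.sub continuous_id).continuousOn hrefl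
    have hgm : MapsTo g (Icc (0:ℝ) 1) (Icc (0:ℝ) 1) := by
      intro x hx
      have := hmaps (hrefl hx)
      exact ⟨by simp [hg]; linarith [this.2], by simp [hg]; linarith [this.1]⟩
    have hgiter : ∀ m x, g^[m] x = 1 - f^[m] (1 - x) := by
      intro m
      induction m with
      | zero => intro x; simp
      | succ k ih =>
          intro x
          rw [Function.iterate_succ_apply', ih x, Function.iterate_succ_apply']
          show (fun x => 1 - f (1 - x)) (1 - f^[k] (1-x)) = 1 - f (f^[k] (1 - x))
          simp
    set b' := 1 - b with hb'
    have hb'I : b' ∈ Icc (0:ℝ) 1 := ⟨by simp [hb']; linarith, by simp [hb']; linarith⟩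
    have hgap' : ∀ y ∈ Icc (0:ℝ) 1, ∀ m, 1 ≤ m → g^[m] y = y → ¬(b' - ε₀ < y ∧ y < b' + ε₀) := by
      intro y hy m hm1 hfix ⟨h1, h2⟩
      have h1y : (1 - y) ∈ Icc (0:ℝ) 1 := hrefl hy
      have hf1y : f^[m] (1 - y) = 1 - y := by
        have := hgiter m y
        rw [hfix] at this
        linarith
      exact hgap (1-y) h1y m hm1 hf1y ⟨by simp [hb'] at h2 ⊢; linarith, by simp [hb'] at h1 ⊢; linarith⟩
    have hret' : ∀ δ : ℝ, 0 < δ → ∃ m, 1 ≤ m ∧ b' < g^[m] b' ∧ g^[m] b' < b' + δ := by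
      intro δ hδ
      obtain ⟨m, hm1, hmlo, hmhi⟩ := hB δ hδ
      refine ⟨m, hm1, ?_, ?_⟩
      · rw [hgiter m b']
        simp [hb']
        linarith
      · rw [hgiter m b']
        simp [hb']
        linarith
    exact core g hgf hgm b' hb'I ε₀ hε₀ hgap' hret'
end

section
/- Let f : [0,1] → [0,1] be continuous, let d < b, assume the open interval (d,b) contains no periodic points, and let y ∈ (d,b). If f^m(y) ∈ (d,b) for some m ≥ 1, and some point x ∈ (d,y) has iterates accumulating at b from the left (there exist n_k → ∞ with x < f^{n_k}(x) < b and f^{n_k}(x) → b), then f^m(y) ∈ (y,b). -/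
/-!
By the intermediate value theorem, every iterate `f^[J]`, `J ≥ 1`, moves all points of the
periodic-point-free window `(d, b)` in the same direction. Suppose `f^[m] y ≤ y`, so `f^[m]` moves
the window to the left. Starting from `f^[n k] x ∈ (x, b)`, the `f^[m]`-orbit decreases and cannot
converge inside the window (its limit would be periodic), so it drops to `x` or below: some iterate
`f^[n k + m t]` moves the window to the left. Since `f^[J]` moving left forces `f^[J + m]` to move
left (test it at `y`), and the `n k` tend to infinity, some `n l` lies far enough in the residue
class of such an `n k` modulo `m`; then `f^[n l] x < x`, contradicting `x < f^[n l] x`.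
-/

open Set Filter Function

lemma forall_apply_lt_self_of_apply_le_self {g : ℝ → ℝ} {s : Set ℝ} (hs : s.OrdConnected)
    (hg : ContinuousOn g s) (hfix : ∀ v ∈ s, g v ≠ v) {u : ℝ} (hu : u ∈ s) (hgu : g u ≤ u) :
    ∀ v ∈ s, g v < v := by
  by_contra! h
  obtain ⟨v, hv, hvg⟩ := h
  obtain ⟨c, hc, hgc⟩ :=
    hs.isPreconnected.intermediate_value₂ hv hu continuousOn_id hg hvg hgu
  exact hfix c hc hgc.symm

lemma exists_iterate_le_of_forall_apply_lt_self {g : ℝ → ℝ} {a b c z : ℝ}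
    (hg : ContinuousOn g (Ioo a b)) (hlt : ∀ v ∈ Ioo a b, g v < v) (hac : a < c) (hz : z < b) :
    ∃ t, g^[t] z ≤ c := by
  by_contra! hgt
  have hmem : ∀ t, g^[t] z ∈ Ioo a b := by
    intro t
    induction t with
    | zero => exact ⟨hac.trans (hgt 0), hz⟩
    | succ t ih => exact ⟨hac.trans (hgt _), iterate_succ_apply' g t z ▸ (hlt _ ih).trans ih.2⟩
  have hanti : Antitone fun t => g^[t] z :=
    antitone_nat_of_succ_le fun t => iterate_succ_apply' g t z ▸ (hlt _ (hmem t)).le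
  have hbdd : BddBelow (range fun t => g^[t] z) := ⟨c, forall_mem_range.2 fun t => (hgt t).le⟩
  have hL : ⨅ t, g^[t] z ∈ Ioo a b :=
    ⟨hac.trans_le (le_ciInf fun t => (hgt t).le), (ciInf_le hbdd 0).trans_lt hz⟩
  have hfixed : IsFixedPt g (⨅ t, g^[t] z) :=
    isFixedPt_of_tendsto_iterate (tendsto_atTop_ciInf hanti hbdd)
      (hg.continuousAt (Ioo_mem_nhds hL.1 hL.2))
  exact (hlt _ hL).ne hfixed

lemma of_modEq_of_forall_add {P : ℕ → Prop} {m I J : ℕ} (hP : ∀ J, P J → P (J + m))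
    (hI : P I) (hIJ : I ≤ J) (hmod : I ≡ J [MOD m]) : P J := by
  obtain ⟨c, hc⟩ := (Nat.modEq_iff_dvd' hIJ).1 hmod
  obtain rfl : J = I + m * c := by omega
  clear hIJ hmod hc
  induction c with
  | zero => exact hI
  | succ c ih => exact mul_add_one m c ▸ add_assoc I _ m ▸ hP _ ih

lemma exists_apply_of_forall_add {P : ℕ → Prop} {m : ℕ} (hm : 0 < m)
    (hP : ∀ J, P J → P (J + m)) {n : ℕ → ℕ} (hn : Tendsto n atTop atTop)
    (hseed : ∀ k, ∃ t, P (n k + m * t)) : ∃ k, P (n k) := by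
  have hclass : ∀ r ∈ Finset.range m, ∀ᶠ J in atTop, (∃ k, n k % m = r) → J % m = r → P J := by
    intro r _
    by_cases hr : ∃ k, n k % m = r
    · obtain ⟨k, hk⟩ := hr
      obtain ⟨t, ht⟩ := hseed k
      filter_upwards [eventually_ge_atTop (n k + m * t)] with J hJ _ hJr
      refine of_modEq_of_forall_add hP ht hJ ?_
      simp [Nat.ModEq, hk, hJr]
    · exact Eventually.of_forall fun J hex => absurd hex hr
  obtain ⟨k, hk⟩ := (hn.eventually ((Finset.eventually_all _).2 hclass)).exists
  exact ⟨k, hk _ (Finset.mem_range.2 (Nat.mod_lt _ hm)) ⟨k, rfl⟩ rfl⟩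

theorem return_lands_beyond_general
    (f : ℝ → ℝ) (hf : ContinuousOn f (Icc 0 1))
    (hmaps : MapsTo f (Icc 0 1) (Icc 0 1))
    (d b : ℝ) (hd : d ∈ Icc (0:ℝ) 1) (hb : b ∈ Icc (0:ℝ) 1)
    (hnoper : ∀ z ∈ Ioo d b, ∀ m ≥ 1, f^[m] z ≠ z)
    (y : ℝ) (hy : y ∈ Ioo d b)
    (m : ℕ) (hm : 1 ≤ m) (hfm : f^[m] y ∈ Ioo d b)
    (x : ℝ) (hx : x ∈ Ioo d y)
    (n : ℕ → ℕ) (hn : Tendsto n atTop atTop)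
    (hacc : ∀ k, x < f^[n k] x ∧ f^[n k] x < b) :
    f^[m] y ∈ Ioo y b := by
  have hcont : ∀ J, ContinuousOn f^[J] (Ioo d b) := fun J =>
    (hf.iterate hmaps J).mono (Ioo_subset_Icc_self.trans (Icc_subset_Icc hd.1 hb.2))
  have hxW : x ∈ Ioo d b := ⟨hx.1, hx.2.trans hy.2⟩
  have hleft : ∀ J ≥ 1, ∀ u ∈ Ioo d b, f^[J] u ≤ u → ∀ v ∈ Ioo d b, f^[J] v < v :=
    fun J hJ _ => forall_apply_lt_self_of_apply_le_self ordConnected_Ioo (hcont J)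
      fun v hv => hnoper v hv J hJ
  refine ⟨lt_of_not_ge fun hle => ?_, hfm.2⟩
  have hleft_m := hleft m hm y hy hle
  have hstep : ∀ J, (∀ v ∈ Ioo d b, f^[J] v < v) → ∀ v ∈ Ioo d b, f^[J + m] v < v :=
    fun J hJ => hleft (J + m) (by omega) y hy <| by
      rw [iterate_add_apply]
      exact ((hJ _ hfm).trans (hleft_m y hy)).le
  have hseed : ∀ k, ∃ t, ∀ v ∈ Ioo d b, f^[n k + m * t] v < v := by
    intro k
    obtain ⟨t, ht⟩ := exists_iterate_le_of_forall_apply_lt_self (hcont m) hleft_m hx.1 (hacc k).2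
    have hnk : n k ≠ 0 := fun h0 => by simpa [h0] using (hacc k).1
    refine ⟨t, hleft _ (by omega) x hxW ?_⟩
    rwa [add_comm, iterate_add_apply, iterate_mul]
  obtain ⟨k, hk⟩ := exists_apply_of_forall_add hm hstep hn hseed
  exact lt_asymm (hacc k).1 (hk x hxW)

theorem return_lands_beyond
    (f : ℝ → ℝ) (hf : ContinuousOn f (Icc 0 1))
    (hmaps : MapsTo f (Icc 0 1) (Icc 0 1))
    (d b : ℝ) (hd : d ∈ Icc (0:ℝ) 1) (hb : b ∈ Icc (0:ℝ) 1) (hdb : d < b)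
    (hnoper : ∀ z ∈ Ioo d b, ∀ m ≥ 1, f^[m] z ≠ z)
    (y : ℝ) (hy : y ∈ Ioo d b)
    (m : ℕ) (hm : 1 ≤ m) (hfm : f^[m] y ∈ Ioo d b)
    (x : ℝ) (hx : x ∈ Ioo d y)
    (n : ℕ → ℕ) (hn : Tendsto n atTop atTop)
    (hacc : ∀ k, x < f^[n k] x ∧ f^[n k] x < b)
    (hlim : Tendsto (fun k => f^[n k] x) atTop (nhds b)) :
    f^[m] y ∈ Ioo y b :=
  return_lands_beyond_general f hf hmaps d b hd hb hnoper y hy m hm hfm x hx n hn hacc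
end
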